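/- Let r ≥ 1 and define G : ℂ^{r−1} × ℂˣ → ℂ^{r−1} × ℂˣ sending (ζ_{1/2}, ζ_{3/2}, …, ζ_{r−1/2}) (indexed by half-integers 1/2,…,r−1/2, with ζ_{r−1/2} ≠ 0) to (λ_{r+1},…,λ_{2r}) where λ_i = (1/2)·∑_{j,k ∈ 1/2+ℕ, j+k = i−1} ζ_j ζ_k. Then G is surjective, and G(ζ) = G(ζ′) if and only if ζ′ = ±ζ. -/

import Mathlib

/-!
Write `z` as the coefficient sequence of a polynomial `P` of degree `< r`. Then `2 λ_i` is the
coefficient of `x^(i-2)` in `P²`, so `λ_{r+1}, …, λ_{2r}` are the top `r` coefficients of `P²`,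
i.e. the first `r` coefficients of `Q²` for the reversed polynomial `Q = x^(r-1) P(1/x)`, whose
constant term `ζ_{r-1/2}` is nonzero. Prescribing the first `r` coefficients of `Q²` with nonzero
constant term determines `Q` modulo `x^r` up to sign: a square root exists by Hensel's lemma in
`ℂ⟦x⟧`, and if `x^r ∣ Q² - Q'² = (Q - Q')(Q + Q')` then `x` divides at most one of the factors,
so `x^r` divides the other.
-/

/-- Twisted quadratic map: with `z m = ζ_{m+1/2}`, one has
`λ_i = (1/2) ∑_{j+k=i-1, j,k ∈ 1/2+ℕ} ζ_j ζ_k = (1/2) ∑_{a+b=i-2, a,b ∈ ℕ} z_a z_b`. -/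
noncomputable def quadMapTw (z : ℕ → ℂ) (i : ℕ) : ℂ :=
  (1/2) * ∑ a ∈ Finset.range (i - 1), z a * z (i - 2 - a)

open Polynomial

theorem Polynomial.exists_natDegree_le_coeff_eq {R : Type*} [Semiring R] {N : ℕ} {z : ℕ → R}
    (hz : ∀ m, N < m → z m = 0) : ∃ P : R[X], P.natDegree ≤ N ∧ P.coeff = z := by
  have hcoeff : (∑ m ∈ Finset.range (N + 1), monomial m (z m)).coeff = z := by
    funext m
    rw [finsetSum_coeff, Finset.sum_eq_single m (fun b _ hb => by simp [coeff_monomial, hb])]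
    · simp
    · intro hm
      simp [hz m (by simpa using hm)]
  refine ⟨_, natDegree_le_iff_coeff_eq_zero.2 fun m hm => ?_, hcoeff⟩
  rw [hcoeff, hz m hm]

theorem Polynomial.coeff_sq_reflect {R : Type*} [Semiring R] {p : R[X]} {N n : ℕ}
    (hp : p.natDegree ≤ N) (hn : n ≤ 2 * N) :
    ((reflect N p) ^ 2).coeff n = (p ^ 2).coeff (2 * N - n) := by
  rw [sq, sq, ← reflect_mul p p hp hp, coeff_reflect, ← two_mul, revAt_le hn]

theorem Polynomial.natDegree_reflect_le_of_le {R : Type*} [Semiring R] {p : R[X]} {N : ℕ}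
    (hp : p.natDegree ≤ N) : (reflect N p).natDegree ≤ N :=
  natDegree_reflect_le.trans (max_le le_rfl hp)

theorem Polynomial.reflect_injective {R : Type*} [Semiring R] (N : ℕ) :
    Function.Injective (reflect N : R[X] → R[X]) :=
  Function.LeftInverse.injective fun _ => reflect_reflect

theorem Polynomial.coeff_zero_reflect {R : Type*} [Semiring R] (p : R[X]) (N : ℕ) :
    (reflect N p).coeff 0 = p.coeff N := by
  rw [coeff_reflect, revAt_le (Nat.zero_le N), Nat.sub_zero]

theorem Polynomial.X_pow_dvd_sub_or_add_of_dvd_sq_sub_sq {R : Type*} [CommRing R] [IsDomain R]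
    [NeZero (2 : R)] {p q : R[X]} {n : ℕ} (hp : p.coeff 0 ≠ 0) (h : X ^ n ∣ p ^ 2 - q ^ 2) :
    X ^ n ∣ p - q ∨ X ^ n ∣ p + q := by
  rw [sq_sub_sq] at h
  by_cases hX : X ∣ p + q
  · refine .inr (prime_X.pow_dvd_of_dvd_mul_right n (fun hX' => hp ?_) h)
    rw [X_dvd_iff, coeff_add] at hX
    rw [X_dvd_iff, coeff_sub] at hX'
    have h2p : 2 * p.coeff 0 = 0 := by linear_combination hX + hX'
    exact (mul_eq_zero.1 h2p).resolve_left two_ne_zero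
  · exact .inl (prime_X.pow_dvd_of_dvd_mul_left n hX h)

theorem Polynomial.eq_or_eq_neg_of_coeff_sq_eq {R : Type*} [CommRing R] [IsDomain R]
    [NeZero (2 : R)] {p q : R[X]} {N : ℕ} (hp : p.natDegree ≤ N) (hq : q.natDegree ≤ N)
    (hp0 : p.coeff 0 ≠ 0) (h : ∀ n ≤ N, (p ^ 2).coeff n = (q ^ 2).coeff n) :
    q = p ∨ q = -p := by
  have hdvd : X ^ (N + 1) ∣ p ^ 2 - q ^ 2 :=
    X_pow_dvd_iff.2 fun d hd => by rw [coeff_sub, h d (by omega), sub_self]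
  have hdeg : ∀ f : R[X], f.natDegree ≤ N → X ^ (N + 1) ∣ f → f = 0 := fun f hf hXf =>
    eq_zero_of_dvd_of_natDegree_lt hXf (by rw [natDegree_X_pow]; omega)
  rcases X_pow_dvd_sub_or_add_of_dvd_sq_sub_sq hp0 hdvd with hsub | hadd
  · exact .inl (sub_eq_zero.1 (hdeg _ ((natDegree_sub_le p q).trans (max_le hp hq)) hsub)).symm
  · exact .inr (eq_neg_of_add_eq_zero_right
      (hdeg _ ((natDegree_add_le p q).trans (max_le hp hq)) hadd))

theorem PowerSeries.exists_sq_eq {R : Type*} [CommRing R] (f : PowerSeries R) {s : R}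
    (hs : s ^ 2 = constantCoeff f) (h2s : IsUnit (2 * s)) :
    ∃ g : PowerSeries R, g ^ 2 = f ∧ constantCoeff g = s := by
  have hroot₀ : (Polynomial.X ^ 2 - Polynomial.C f).eval (C s) ∈ Ideal.span {X} := by
    rw [Ideal.mem_span_singleton, X_dvd_iff]
    simp [hs]
  have hsimple : IsUnit (Ideal.Quotient.mk (Ideal.span {X})
      ((Polynomial.X ^ 2 - Polynomial.C f).derivative.eval (C s))) := by
    have hderiv : (Polynomial.X ^ 2 - Polynomial.C f).derivative.eval (C s) = C (2 * s) := by
      simp only [derivative_sub, derivative_X_pow, eval_sub, eval_mul, eval_C,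
        eval_pow, eval_X, map_mul, map_ofNat]
      norm_num
    exact hderiv ▸ (h2s.map C).map _
  obtain ⟨g, hroot, hg⟩ := HenselianRing.is_henselian _
    (monic_X_pow_sub_C f two_ne_zero) _ hroot₀ hsimple
  refine ⟨g, by simpa [sub_eq_zero] using hroot, ?_⟩
  rw [Ideal.mem_span_singleton, X_dvd_iff] at hg
  simpa [sub_eq_zero] using hg

theorem Polynomial.exists_coeff_sq_eq {K : Type*} [Field K] [IsAlgClosed K] [NeZero (2 : K)]
    (N : ℕ) {c : ℕ → K} (hc : c 0 ≠ 0) :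
    ∃ Q : K[X], Q.natDegree ≤ N ∧ Q.coeff 0 ≠ 0 ∧ ∀ n ≤ N, (Q ^ 2).coeff n = c n := by
  obtain ⟨s, hs⟩ := IsAlgClosed.exists_pow_nat_eq (c 0) two_pos
  have hs0 : s ≠ 0 := by rintro rfl; simp_all
  obtain ⟨g, hg, hg0⟩ := PowerSeries.exists_sq_eq (PowerSeries.mk c) (s := s) (by simpa using hs)
    (Ne.isUnit (mul_ne_zero two_ne_zero hs0))
  refine ⟨PowerSeries.trunc (N + 1) g, Nat.le_of_lt_succ (PowerSeries.natDegree_trunc_lt g N),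
    by simpa [PowerSeries.coeff_trunc] using hg0 ▸ hs0, fun n hn => ?_⟩
  rw [sq, ← coeff_coe, coe_mul, ← PowerSeries.coeff_mul_eq_coeff_trunc_mul_trunc _ _ (by omega),
    ← sq, hg, PowerSeries.coeff_mk]

theorem two_mul_quadMapTw_coeff (P : ℂ[X]) {i : ℕ} (hi : 2 ≤ i) :
    2 * quadMapTw P.coeff i = (P ^ 2).coeff (i - 2) := by
  obtain ⟨n, rfl⟩ := Nat.exists_eq_add_of_le' hi
  rw [quadMapTw, sq, coeff_mul, Finset.Nat.sum_antidiagonal_eq_sum_range_succ_mk]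
  simp only [Nat.add_sub_cancel, show n + 2 - 1 = n + 1 by omega]
  ring

theorem coeff_sq_reflect_eq_two_mul_quadMapTw {P : ℂ[X]} {N n : ℕ} (hP : P.natDegree ≤ N)
    (hn : n ≤ 2 * N) : ((reflect N P) ^ 2).coeff n = 2 * quadMapTw P.coeff (2 * N + 2 - n) := by
  rw [coeff_sq_reflect hP hn, two_mul_quadMapTw_coeff P (by omega)]
  congr 1
  omega

theorem exists_quadMapTw_eq (N : ℕ) {lam : ℕ → ℂ} (hlam : lam (2 * N + 2) ≠ 0) :
    ∃ P : ℂ[X], P.natDegree ≤ N ∧ P.coeff N ≠ 0 ∧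
      ∀ i, N + 2 ≤ i → i ≤ 2 * N + 2 → quadMapTw P.coeff i = lam i := by
  obtain ⟨Q, hQ, hQ0, hQsq⟩ :=
    exists_coeff_sq_eq N (c := fun n => 2 * lam (2 * N + 2 - n)) (by simpa using hlam)
  refine ⟨reflect N Q, natDegree_reflect_le_of_le hQ,
    by rwa [← coeff_zero_reflect, reflect_reflect], fun i hi₁ hi₂ => ?_⟩
  obtain ⟨n, rfl⟩ : ∃ n, i = 2 * N + 2 - n := ⟨2 * N + 2 - i, by omega⟩
  have hcoeff := coeff_sq_reflect_eq_two_mul_quadMapTw (natDegree_reflect_le_of_le hQ)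
    (show n ≤ 2 * N by omega)
  rw [reflect_reflect, hQsq n (by omega)] at hcoeff
  exact (mul_left_cancel₀ two_ne_zero hcoeff).symm

theorem eq_or_eq_neg_of_quadMapTw_eq {P P' : ℂ[X]} {N : ℕ} (hP : P.natDegree ≤ N)
    (hP' : P'.natDegree ≤ N) (hPN : P.coeff N ≠ 0)
    (h : ∀ i, N + 2 ≤ i → i ≤ 2 * N + 2 → quadMapTw P.coeff i = quadMapTw P'.coeff i) :
    P' = P ∨ P' = -P := by
  have hsq : ∀ n ≤ N, ((reflect N P) ^ 2).coeff n = ((reflect N P') ^ 2).coeff n := fun n hn => by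
    rw [coeff_sq_reflect_eq_two_mul_quadMapTw hP (by omega),
      coeff_sq_reflect_eq_two_mul_quadMapTw hP' (by omega), h _ (by omega) (by omega)]
  have hreflect := eq_or_eq_neg_of_coeff_sq_eq (natDegree_reflect_le_of_le hP)
    (natDegree_reflect_le_of_le hP') (by rwa [coeff_zero_reflect]) hsq
  rwa [← reflect_neg, (reflect_injective N).eq_iff, (reflect_injective N).eq_iff] at hreflect

theorem quadMapTw_neg (z : ℕ → ℂ) (i : ℕ) : quadMapTw (fun m => -z m) i = quadMapTw z i := by
  simp [quadMapTw]

theorem stmt3 (r : ℕ) (hr : 1 ≤ r) :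
    (∀ lam : ℕ → ℂ, lam (2*r) ≠ 0 →
      ∃ z : ℕ → ℂ, (∀ m, r ≤ m → z m = 0) ∧ z (r - 1) ≠ 0 ∧
        ∀ i, r + 1 ≤ i → i ≤ 2*r → quadMapTw z i = lam i) ∧
    (∀ z z' : ℕ → ℂ, (∀ m, r ≤ m → z m = 0) → z (r - 1) ≠ 0 →
      (∀ m, r ≤ m → z' m = 0) → z' (r - 1) ≠ 0 →
      ((∀ i, r + 1 ≤ i → i ≤ 2*r → quadMapTw z i = quadMapTw z' i) ↔
        (z' = z ∨ z' = fun m => - z m))) := by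
  obtain ⟨N, rfl⟩ : ∃ N, r = N + 1 := ⟨r - 1, by omega⟩
  simp only [Nat.add_sub_cancel, mul_add, mul_one, add_assoc, Nat.reduceAdd]
  refine ⟨fun lam hlam => ?_, fun z z' hz hzN hz' _ => ⟨fun h => ?_, ?_⟩⟩
  · obtain ⟨P, hP, hPN, hPlam⟩ := exists_quadMapTw_eq N hlam
    exact ⟨P.coeff, fun m hm => coeff_eq_zero_of_natDegree_lt (by omega), hPN, hPlam⟩
  · obtain ⟨P, hP, rfl⟩ := exists_natDegree_le_coeff_eq hz
    obtain ⟨P', hP', rfl⟩ := exists_natDegree_le_coeff_eq hz'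
    rcases eq_or_eq_neg_of_quadMapTw_eq hP hP' hzN h with rfl | rfl
    · exact .inl rfl
    · exact .inr (funext (coeff_neg P))
  · rintro (rfl | rfl) i - -
    · rfl
    · exact (quadMapTw_neg z i).symm
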